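/- arXiv:math/0602663 — 2 statements merged into one kernel-verified Lean document; each statement's English description precedes it below -/
import Mathlib

section
/- Let A > 1, let h and c be even functions on ℝ^d∖{0} homogeneous of degree 0, with c bounded on S^{d−1} and h(S^{d−1}) ⊂ [h0, h1] where h0 > 0. Let f be a measurable function on ℝ^d with f(ξ) = c(ξ)|ξ|^{−h(ξ)} for all |ξ| > A, and let ρ : ℝ^{d−1} → ℝ be rapidly decreasing. Then for every s > 0 and every m ∈ ℕ, ∫_{|γ| > |p|^s} |f(γ, p) − f(pθ0)| |ρ(γ)| dγ = O(|p|^{−h0−ms}) as |p| → ∞. -/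
open MeasureTheory Filter

noncomputable section

/-- The point `(γ, p) ∈ ℝ^{m+1}` with `γ ∈ ℝ^m` and last coordinate `p`. -/
def app {m : ℕ} (γ : EuclideanSpace ℝ (Fin m)) (p : ℝ) :
    EuclideanSpace ℝ (Fin (m + 1)) :=
  WithLp.toLp 2 (Fin.snoc (α := fun _ => ℝ) (WithLp.ofLp γ) p)

/-- The direction `θ₀ = (0, …, 0, 1) ∈ ℝ^{m+1}`. -/
def theta0 (m : ℕ) : EuclideanSpace ℝ (Fin (m + 1)) := app 0 1

/-- `g` is homogeneous of degree `0` on `ℝ^n ∖ {0}`. -/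
def Homog0 {n : ℕ} (g : EuclideanSpace ℝ (Fin n) → ℝ) : Prop :=
  ∀ t : ℝ, 0 < t → ∀ ξ : EuclideanSpace ℝ (Fin n), ξ ≠ 0 → g (t • ξ) = g ξ

/-- `g` is even. -/
def EvenFn {n : ℕ} (g : EuclideanSpace ℝ (Fin n) → ℝ) : Prop :=
  ∀ ξ : EuclideanSpace ℝ (Fin n), g (-ξ) = g ξ

/-- `g` is Lipschitz of order `α` on the unit sphere. -/
def LipSphere {n : ℕ} (g : EuclideanSpace ℝ (Fin n) → ℝ) (α : ℝ) : Prop :=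
  ∃ L > (0 : ℝ), ∀ x y : EuclideanSpace ℝ (Fin n), ‖x‖ = 1 → ‖y‖ = 1 →
    |g x - g y| ≤ L * ‖x - y‖ ^ α

/-- `ρ` is rapidly decreasing. -/
def RapidDecay {n : ℕ} (ρ : EuclideanSpace ℝ (Fin n) → ℝ) : Prop :=
  ∀ k : ℕ, ∃ C > (0 : ℝ), ∀ x : EuclideanSpace ℝ (Fin n),
    |ρ x| ≤ C * (1 + ‖x‖) ^ (-(k : ℝ))

/-
On the region `|γ| > |p|^s` both points `(γ, p)` and `p θ₀` have norm at least `|p|`, so once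
`|p| > max A 1` the homogeneous form of `f` and `h ≥ h₀` bound each value of `f` by
`sup |c| · |p|^{-h₀}`. Rapid decay of order `k + m + 1` splits into `(1 + |γ|)^{-k} ≤ |p|^{-k s}`
on the region times the integrable weight `(1 + |γ|)^{-(m+1)}`, which yields the extra `|p|^{-k s}`.
-/

lemma app_apply_last {m : ℕ} (γ : EuclideanSpace ℝ (Fin m)) (p : ℝ) :
    app γ p (Fin.last m) = p := by
  simp [app]

lemma abs_le_norm_app {m : ℕ} (γ : EuclideanSpace ℝ (Fin m)) (p : ℝ) : |p| ≤ ‖app γ p‖ := by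
  simpa [app_apply_last] using PiLp.norm_apply_le (app γ p) (Fin.last m)

lemma Homog0.abs_le_of_forall_norm_eq_one {n : ℕ} {c : EuclideanSpace ℝ (Fin n) → ℝ}
    (hc : Homog0 c) {Cb : ℝ} (hCb : ∀ ξ : EuclideanSpace ℝ (Fin n), ‖ξ‖ = 1 → |c ξ| ≤ Cb)
    {ξ : EuclideanSpace ℝ (Fin n)} (hξ : ξ ≠ 0) : |c ξ| ≤ Cb := by
  have hξ₀ : 0 < ‖ξ‖ := norm_pos_iff.2 hξ
  rw [← hc _ (inv_pos.2 hξ₀) ξ hξ]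
  exact hCb _ (by rw [norm_smul, norm_inv, norm_norm, inv_mul_cancel₀ hξ₀.ne'])

lemma abs_mul_rpow_neg_le {E : Type*} [NormedAddCommGroup E] {c h : E → ℝ} {Cb h₀ r : ℝ}
    (hc : ∀ ξ, ξ ≠ 0 → |c ξ| ≤ Cb) (hh : ∀ ξ, ξ ≠ 0 → h₀ ≤ h ξ) (hh₀ : 0 ≤ h₀) (hr : 1 ≤ r)
    {ξ : E} (hξ : r ≤ ‖ξ‖) : |c ξ * ‖ξ‖ ^ (-h ξ)| ≤ Cb * r ^ (-h₀) := by
  have hξ₀ : ξ ≠ 0 := norm_pos_iff.1 (by linarith)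
  have hpow : ‖ξ‖ ^ (-h ξ) ≤ r ^ (-h₀) :=
    calc ‖ξ‖ ^ (-h ξ) ≤ ‖ξ‖ ^ (-h₀) :=
          Real.rpow_le_rpow_of_exponent_le (hr.trans hξ) (neg_le_neg (hh ξ hξ₀))
      _ ≤ r ^ (-h₀) := Real.rpow_le_rpow_of_nonpos (by linarith) hξ (neg_nonpos.2 hh₀)
  rw [abs_mul, abs_of_nonneg (Real.rpow_nonneg (norm_nonneg ξ) _)]
  calc |c ξ| * ‖ξ‖ ^ (-h ξ) ≤ |c ξ| * r ^ (-h₀) := mul_le_mul_of_nonneg_left hpow (abs_nonneg _)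
    _ ≤ Cb * r ^ (-h₀) := mul_le_mul_of_nonneg_right (hc ξ hξ₀) (by positivity)

namespace RapidDecay

variable {n : ℕ} {ρ : EuclideanSpace ℝ (Fin n) → ℝ}

lemma exists_abs_le_rpow_mul (hρ : RapidDecay ρ) (k j : ℕ) :
    ∃ C > (0 : ℝ), ∀ R > (0 : ℝ), ∀ γ : EuclideanSpace ℝ (Fin n), R < ‖γ‖ →
      |ρ γ| ≤ C * R ^ (-(k : ℝ)) * (1 + ‖γ‖) ^ (-(j : ℝ)) := by
  obtain ⟨C, hC₀, hC⟩ := hρ (k + j)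
  refine ⟨C, hC₀, fun R hR γ hγ => ?_⟩
  have hγ₀ : (0 : ℝ) < 1 + ‖γ‖ := by positivity
  have hsplit : (1 + ‖γ‖) ^ (-((k + j : ℕ) : ℝ)) =
      (1 + ‖γ‖) ^ (-(k : ℝ)) * (1 + ‖γ‖) ^ (-(j : ℝ)) := by
    rw [← Real.rpow_add hγ₀]
    push_cast
    ring_nf
  have hk : (1 + ‖γ‖) ^ (-(k : ℝ)) ≤ R ^ (-(k : ℝ)) :=
    Real.rpow_le_rpow_of_nonpos hR (by linarith) (neg_nonpos.2 (Nat.cast_nonneg k))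
  calc |ρ γ| ≤ C * ((1 + ‖γ‖) ^ (-(k : ℝ)) * (1 + ‖γ‖) ^ (-(j : ℝ))) := hsplit ▸ hC γ
    _ ≤ C * (R ^ (-(k : ℝ)) * (1 + ‖γ‖) ^ (-(j : ℝ))) := by gcongr
    _ = C * R ^ (-(k : ℝ)) * (1 + ‖γ‖) ^ (-(j : ℝ)) := by ring

lemma exists_setIntegral_tail_le (hρ : RapidDecay ρ) (k : ℕ) :
    ∃ C : ℝ, ∀ R > (0 : ℝ), ∀ (g : EuclideanSpace ℝ (Fin n) → ℝ) (B : ℝ), (∀ γ, |g γ| ≤ B) →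
      ∫ γ in {γ : EuclideanSpace ℝ (Fin n) | R < ‖γ‖}, |g γ| * |ρ γ| ≤
        B * C * R ^ (-(k : ℝ)) := by
  obtain ⟨C, hC₀, hC⟩ := hρ.exists_abs_le_rpow_mul k (n + 1)
  set w : EuclideanSpace ℝ (Fin n) → ℝ := fun γ => (1 + ‖γ‖) ^ (-((n + 1 : ℕ) : ℝ))
  have hw : Integrable w := integrable_one_add_norm (by simp)
  have hw₀ : ∀ γ, 0 ≤ w γ := fun γ => Real.rpow_nonneg (by positivity) _
  refine ⟨C * ∫ γ, w γ, fun R hR g B hg => ?_⟩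
  set S := {γ : EuclideanSpace ℝ (Fin n) | R < ‖γ‖}
  have hS : MeasurableSet S := (isOpen_lt continuous_const continuous_norm).measurableSet
  have hB : 0 ≤ B := (abs_nonneg _).trans (hg 0)
  set K := B * C * R ^ (-(k : ℝ))
  have hK : 0 ≤ K := by positivity
  have hpointwise : ∀ γ ∈ S, |g γ| * |ρ γ| ≤ K * w γ := fun γ hγ =>
    calc |g γ| * |ρ γ| ≤ B * (C * R ^ (-(k : ℝ)) * w γ) :=
          mul_le_mul (hg γ) (hC R hR γ hγ) (abs_nonneg _) hB
      _ = K * w γ := by ring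
  calc ∫ γ in S, |g γ| * |ρ γ| ≤ ∫ γ in S, K * w γ :=
        integral_mono_of_nonneg (.of_forall fun γ => by positivity)
          (hw.const_mul K).integrableOn ((ae_restrict_iff' hS).2 (.of_forall hpointwise))
    _ = K * ∫ γ in S, w γ := integral_const_mul _ _
    _ ≤ K * ∫ γ, w γ :=
        mul_le_mul_of_nonneg_left (setIntegral_le_integral hw (.of_forall hw₀)) hK
    _ = B * (C * ∫ γ, w γ) * R ^ (-(k : ℝ)) := by ring

end RapidDecay

open Asymptotics in
theorem statement14_general (m : ℕ) (A h₀ h₁ : ℝ) (hh₀ : 0 < h₀)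
    (h c : EuclideanSpace ℝ (Fin (m + 1)) → ℝ)
    (hchom : Homog0 c)
    (hcbdd : ∃ Cb : ℝ, ∀ ξ : EuclideanSpace ℝ (Fin (m + 1)), ‖ξ‖ = 1 → |c ξ| ≤ Cb)
    (hhran : ∀ ξ : EuclideanSpace ℝ (Fin (m + 1)), ξ ≠ 0 →
      h ξ ∈ Set.Icc h₀ h₁)
    (f : EuclideanSpace ℝ (Fin (m + 1)) → ℝ)
    (hf : ∀ ξ : EuclideanSpace ℝ (Fin (m + 1)), A < ‖ξ‖ →
      f ξ = c ξ * ‖ξ‖ ^ (-h ξ))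
    (ρ : EuclideanSpace ℝ (Fin m) → ℝ)
    (hρ : RapidDecay ρ) :
    ∀ s : ℝ, 0 < s → ∀ k : ℕ,
      (fun p : ℝ =>
          ∫ γ in {γ : EuclideanSpace ℝ (Fin m) | |p| ^ s < ‖γ‖},
            |f (app γ p) - f (app 0 p)| * |ρ γ|)
        =O[cocompact ℝ] fun p : ℝ => |p| ^ (-h₀ - k * s) := by
  intro s _ k
  obtain ⟨Cb, hCb⟩ := hcbdd
  obtain ⟨C, hC⟩ := hρ.exists_setIntegral_tail_le k
  refine IsBigO.of_bound (2 * Cb * C) ?_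
  filter_upwards [tendsto_norm_cocompact_atTop.eventually_gt_atTop (max A 1)] with p hp
  rw [Real.norm_eq_abs, max_lt_iff] at hp
  have hp₀ : 0 < |p| := by linarith
  have hfp : ∀ γ : EuclideanSpace ℝ (Fin m), |f (app γ p)| ≤ Cb * |p| ^ (-h₀) := fun γ => by
    rw [hf _ (hp.1.trans_le (abs_le_norm_app γ p))]
    exact abs_mul_rpow_neg_le (fun ξ hξ => hchom.abs_le_of_forall_norm_eq_one hCb hξ)
      (fun ξ hξ => (hhran ξ hξ).1) hh₀.le hp.2.le (abs_le_norm_app γ p)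
  have hdiff : ∀ γ, |f (app γ p) - f (app 0 p)| ≤ 2 * Cb * |p| ^ (-h₀) := fun γ =>
    (abs_sub _ _).trans (by linarith [hfp γ, hfp 0])
  rw [Real.norm_of_nonneg (integral_nonneg fun γ => by positivity),
    Real.norm_of_nonneg (by positivity)]
  calc _ ≤ 2 * Cb * |p| ^ (-h₀) * C * (|p| ^ s) ^ (-(k : ℝ)) :=
        hC (|p| ^ s) (by positivity) _ _ hdiff
    _ = 2 * Cb * C * |p| ^ (-h₀ - k * s) := by
        rw [← Real.rpow_mul hp₀.le, sub_eq_add_neg, Real.rpow_add hp₀]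
        ring_nf

open Asymptotics in
theorem statement14 (m : ℕ) (hm : 1 ≤ m) (A h₀ h₁ : ℝ) (hA : 1 < A) (hh₀ : 0 < h₀)
    (h c : EuclideanSpace ℝ (Fin (m + 1)) → ℝ)
    (hheven : EvenFn h) (hceven : EvenFn c)
    (hhhom : Homog0 h) (hchom : Homog0 c)
    (hcbdd : ∃ Cb : ℝ, ∀ ξ : EuclideanSpace ℝ (Fin (m + 1)), ‖ξ‖ = 1 → |c ξ| ≤ Cb)
    (hhran : ∀ ξ : EuclideanSpace ℝ (Fin (m + 1)), ξ ≠ 0 →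
      h ξ ∈ Set.Icc h₀ h₁)
    (f : EuclideanSpace ℝ (Fin (m + 1)) → ℝ) (hfmeas : Measurable f)
    (hf : ∀ ξ : EuclideanSpace ℝ (Fin (m + 1)), A < ‖ξ‖ →
      f ξ = c ξ * ‖ξ‖ ^ (-h ξ))
    (ρ : EuclideanSpace ℝ (Fin m) → ℝ) (hρmeas : Measurable ρ)
    (hρ : RapidDecay ρ) :
    ∀ s : ℝ, 0 < s → ∀ k : ℕ,
      (fun p : ℝ =>
          ∫ γ in {γ : EuclideanSpace ℝ (Fin m) | |p| ^ s < ‖γ‖},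
            |f (app γ p) - f (app 0 p)| * |ρ γ|)
        =O[cocompact ℝ] fun p : ℝ => |p| ^ (-h₀ - k * s) :=
  statement14_general m A h₀ h₁ hh₀ h c hchom hcbdd hhran f hf ρ hρ
end
end

section
/- Let h be an even function on ℝ^d∖{0}, homogeneous of degree 0 and Lipschitz of order α ∈ (0,1] on the sphere. Then there exists C > 0 such that for all p ∈ ℝ with p ≠ 0 and all γ ∈ ℝ^{d−1}, |h(θ0) ln|p| − (1/2) h(γ, p) ln(|γ|² + p²)| ≤ C (min((|γ|/|p|)^α, 1) · |ln|p|| + |γ|²/p²). -/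
open MeasureTheory Filter

noncomputable section

/-!
Write `ξ = (γ, p)`. Since `log (|γ|² + p²) = 2 log |p| + log (1 + |γ|²/p²)`, the quantity equals
`(h θ₀ - h ξ) log |p| - ½ h ξ log (1 + |γ|²/p²)`. The second term is `O(|γ|²/p²)` because `h` is
bounded and `log (1 + t) ≤ t`. For the first, evenness and homogeneity give `h θ₀ = h (0, p)`, and
the normalisations of `ξ` and `(0, p)` are at distance at most `2 min (|γ|/|p|, 1)`, so the Hölder
condition on the sphere bounds `h ξ - h θ₀` by a multiple of `min ((|γ|/|p|)^α, 1)`.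
-/

section Normalize

variable {E : Type*} [NormedAddCommGroup E] [NormedSpace ℝ E]

theorem norm_inv_norm_smul {x : E} (hx : x ≠ 0) : ‖‖x‖⁻¹ • x‖ = 1 := by
  rw [norm_smul, norm_inv, norm_norm, inv_mul_cancel₀ (norm_ne_zero_iff.mpr hx)]

theorem norm_inv_norm_smul_sub_inv_norm_smul_le (x : E) {y : E} (hy : y ≠ 0) :
    ‖‖x‖⁻¹ • x - ‖y‖⁻¹ • y‖ ≤ 2 * ‖x - y‖ / ‖y‖ := by
  have hy' : 0 < ‖y‖ := norm_pos_iff.mpr hy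
  rcases eq_or_ne x 0 with rfl | hx
  · simp [norm_smul, hy'.ne']
  have hx' : 0 < ‖x‖ := norm_pos_iff.mpr hx
  have hsplit : ‖x‖⁻¹ • x - ‖y‖⁻¹ • y = (‖x‖⁻¹ - ‖y‖⁻¹) • x + ‖y‖⁻¹ • (x - y) := by
    module
  have hcoef : |‖x‖⁻¹ - ‖y‖⁻¹| * ‖x‖ = |‖y‖ - ‖x‖| / ‖y‖ := by
    rw [inv_sub_inv hx'.ne' hy'.ne', abs_div, abs_mul, abs_of_pos hx', abs_of_pos hy']
    field_simp
  calc ‖‖x‖⁻¹ • x - ‖y‖⁻¹ • y‖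
      ≤ |‖x‖⁻¹ - ‖y‖⁻¹| * ‖x‖ + ‖y‖⁻¹ * ‖x - y‖ := by
        rw [hsplit]
        refine (norm_add_le _ _).trans_eq ?_
        rw [norm_smul, norm_smul, Real.norm_eq_abs, norm_inv, norm_norm]
    _ ≤ ‖x - y‖ / ‖y‖ + ‖x - y‖ / ‖y‖ := by
        rw [hcoef, inv_mul_eq_div, abs_sub_comm]
        gcongr
        exact abs_norm_sub_norm_le x y
    _ = 2 * ‖x - y‖ / ‖y‖ := by ring

end Normalize

section Homogeneous

variable {n : ℕ} {g : EuclideanSpace ℝ (Fin n) → ℝ}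

theorem Homog0.apply_inv_norm_smul (hg : Homog0 g) {x : EuclideanSpace ℝ (Fin n)} (hx : x ≠ 0) :
    g (‖x‖⁻¹ • x) = g x :=
  hg _ (inv_pos.mpr (norm_pos_iff.mpr hx)) x hx

theorem Homog0.apply_smul_of_ne_zero (hg : Homog0 g) (hev : EvenFn g) {t : ℝ} (ht : t ≠ 0)
    {x : EuclideanSpace ℝ (Fin n)} (hx : x ≠ 0) : g (t • x) = g x := by
  rcases ht.lt_or_gt with hneg | hpos
  · rw [← neg_neg t, neg_smul, hev, hg _ (neg_pos.mpr hneg) x hx]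
  · exact hg t hpos x hx

theorem Homog0.abs_sub_le (hg : Homog0 g) {L α : ℝ} (hL : 0 ≤ L) (hα : 0 ≤ α)
    (hlip : ∀ x y : EuclideanSpace ℝ (Fin n), ‖x‖ = 1 → ‖y‖ = 1 → |g x - g y| ≤ L * ‖x - y‖ ^ α)
    {x y : EuclideanSpace ℝ (Fin n)} (hx : x ≠ 0) (hy : y ≠ 0) :
    |g x - g y| ≤ L * 2 ^ α * min ((‖x - y‖ / ‖y‖) ^ α) 1 := by
  set d := ‖‖x‖⁻¹ • x - ‖y‖⁻¹ • y‖
  have hd_le_two : d ≤ 2 := by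
    calc d ≤ ‖‖x‖⁻¹ • x‖ + ‖‖y‖⁻¹ • y‖ := norm_sub_le _ _
      _ = 2 := by rw [norm_inv_norm_smul hx, norm_inv_norm_smul hy]; norm_num
  have hd_le : d ≤ 2 * (‖x - y‖ / ‖y‖) := by
    rw [← mul_div_assoc]; exact norm_inv_norm_smul_sub_inv_norm_smul_le x hy
  have hdα : d ^ α ≤ 2 ^ α * min ((‖x - y‖ / ‖y‖) ^ α) 1 := by
    rw [mul_min_of_nonneg _ _ (by positivity), mul_one]
    refine le_min ?_ (by gcongr)
    rw [← Real.mul_rpow zero_le_two (by positivity)]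
    gcongr
  rw [← hg.apply_inv_norm_smul hx, ← hg.apply_inv_norm_smul hy, mul_assoc]
  exact (hlip _ _ (norm_inv_norm_smul hx) (norm_inv_norm_smul hy)).trans (by gcongr)

end Homogeneous

section Coordinates

variable {m : ℕ}

theorem norm_app_sq (γ : EuclideanSpace ℝ (Fin m)) (p : ℝ) :
    ‖app γ p‖ ^ 2 = ‖γ‖ ^ 2 + p ^ 2 := by
  simp [EuclideanSpace.norm_sq_eq, Fin.sum_univ_castSucc, app]

theorem norm_app_zero_left (p : ℝ) : ‖app (0 : EuclideanSpace ℝ (Fin m)) p‖ = |p| := by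
  rw [← Real.sqrt_sq (norm_nonneg _), norm_app_sq, norm_zero, zero_pow two_ne_zero, zero_add,
    Real.sqrt_sq_eq_abs]

theorem norm_app_zero_right (γ : EuclideanSpace ℝ (Fin m)) : ‖app γ 0‖ = ‖γ‖ := by
  rw [← Real.sqrt_sq (norm_nonneg _), norm_app_sq, zero_pow two_ne_zero, add_zero,
    Real.sqrt_sq (norm_nonneg _)]

theorem app_sub_app_zero (γ : EuclideanSpace ℝ (Fin m)) (p : ℝ) :
    app γ p - app 0 p = app γ 0 := by
  ext i
  refine Fin.lastCases ?_ (fun j => ?_) i <;> simp [app]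

theorem app_zero_left (p : ℝ) : app (0 : EuclideanSpace ℝ (Fin m)) p = p • theta0 m := by
  ext i
  refine Fin.lastCases ?_ (fun j => ?_) i <;> simp [app, theta0]

theorem app_ne_zero (γ : EuclideanSpace ℝ (Fin m)) {p : ℝ} (hp : p ≠ 0) : app γ p ≠ 0 := by
  rw [← norm_ne_zero_iff, ← pow_ne_zero_iff two_ne_zero, norm_app_sq]
  positivity

theorem theta0_ne_zero : theta0 m ≠ 0 := app_ne_zero 0 one_ne_zero

end Coordinates

theorem Real.log_add_sq {a : ℝ} (ha : 0 ≤ a) {p : ℝ} (hp : p ≠ 0) :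
    Real.log (a + p ^ 2) = 2 * Real.log |p| + Real.log (1 + a / p ^ 2) := by
  have hp2 : 0 < p ^ 2 := by positivity
  rw [show a + p ^ 2 = p ^ 2 * (1 + a / p ^ 2) by field_simp; ring,
    Real.log_mul hp2.ne' (by positivity : (0 : ℝ) < 1 + a / p ^ 2).ne', Real.log_pow, Real.log_abs]
  push_cast; ring

theorem abs_mul_sub_half_mul_add_le {a b l q K A B : ℝ} (hK : 0 ≤ K) (hA : 0 ≤ A) (hA1 : A ≤ 1)
    (hab : |b - a| ≤ K * A) (hq : 0 ≤ q) (hqB : q ≤ B) :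
    |a * l - 1 / 2 * b * (2 * l + q)| ≤ (K + |a| + 1) * (A * |l| + B) := by
  have hb : |b| ≤ |a| + K := by
    have := abs_sub_abs_le_abs_sub b a
    nlinarith
  calc |a * l - 1 / 2 * b * (2 * l + q)| = |(b - a) * l + 1 / 2 * b * q| := by
        rw [← abs_neg]; ring_nf
    _ ≤ |b - a| * |l| + 1 / 2 * |b| * q := by
        refine (abs_add_le _ _).trans_eq ?_
        rw [abs_mul, abs_mul, abs_mul, abs_of_nonneg hq]; norm_num
    _ ≤ K * A * |l| + 1 / 2 * (|a| + K) * B := by gcongr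
    _ ≤ (K + |a| + 1) * (A * |l| + B) := by
        have : 0 ≤ A * |l| := by positivity
        nlinarith [abs_nonneg a, abs_nonneg l]

theorem statement16_general (m : ℕ) (α : ℝ) (hα : 0 < α)
    (h : EuclideanSpace ℝ (Fin (m + 1)) → ℝ)
    (hheven : EvenFn h) (hhhom : Homog0 h) (hhlip : LipSphere h α) :
    ∃ C > (0 : ℝ), ∀ p : ℝ, p ≠ 0 → ∀ γ : EuclideanSpace ℝ (Fin m),
      abs (h (theta0 m) * Real.log (abs p) -
          (1 / 2) * h (app γ p) * Real.log (‖γ‖ ^ 2 + p ^ 2)) ≤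
        C * (min ((‖γ‖ / abs p) ^ α) 1 * abs (Real.log (abs p)) +
          ‖γ‖ ^ 2 / p ^ 2) := by
  obtain ⟨L, hL, hlip⟩ := hhlip
  refine ⟨L * 2 ^ α + |h (theta0 m)| + 1, by positivity, fun p hp γ => ?_⟩
  have hθ : h (app 0 p) = h (theta0 m) := by
    rw [app_zero_left, hhhom.apply_smul_of_ne_zero hheven hp theta0_ne_zero]
  have hdiff : |h (app γ p) - h (theta0 m)| ≤ L * 2 ^ α * min ((‖γ‖ / |p|) ^ α) 1 := by
    have := hhhom.abs_sub_le hL.le hα.le hlip (app_ne_zero γ hp) (app_ne_zero 0 hp)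
    rwa [app_sub_app_zero, norm_app_zero_right, norm_app_zero_left, hθ] at this
  have hB : 0 ≤ ‖γ‖ ^ 2 / p ^ 2 := by positivity
  rw [Real.log_add_sq (by positivity) hp]
  refine abs_mul_sub_half_mul_add_le (by positivity) (by positivity) (min_le_right _ _) hdiff
    (Real.log_nonneg (by linarith)) ?_
  linarith [Real.log_le_sub_one_of_pos (by linarith : 0 < 1 + ‖γ‖ ^ 2 / p ^ 2)]

theorem statement16 (m : ℕ) (hm : 1 ≤ m) (α : ℝ) (hα : 0 < α) (hα1 : α ≤ 1)
    (h : EuclideanSpace ℝ (Fin (m + 1)) → ℝ)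
    (hheven : EvenFn h) (hhhom : Homog0 h) (hhlip : LipSphere h α) :
    ∃ C > (0 : ℝ), ∀ p : ℝ, p ≠ 0 → ∀ γ : EuclideanSpace ℝ (Fin m),
      abs (h (theta0 m) * Real.log (abs p) -
          (1 / 2) * h (app γ p) * Real.log (‖γ‖ ^ 2 + p ^ 2)) ≤
        C * (min ((‖γ‖ / abs p) ^ α) 1 * abs (Real.log (abs p)) +
          ‖γ‖ ^ 2 / p ^ 2) :=
  statement16_general m α hα h hheven hhhom hhlip
end
end
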